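/- Let S ⊆ E^n with 0̄ ∈ S and a = χ^S. Then B'_k(a) = 0 for every k with 0 < k ≤ cor(S). -/

import Mathlib

open Finset

/-- Weight of a vector in the Boolean cube: the number of ones. -/
def wt {n : ℕ} (y : Fin n → Bool) : ℕ := (Finset.univ.filter fun i => y i = true).card

/-- The face `E^n_y(z) = {x : [x,y] = [z,y]}`: all `x` agreeing with `z` on the
support of `y`. -/
def face {n : ℕ} (y z : Fin n → Bool) : Finset (Fin n → Bool) :=
  Finset.univ.filter fun x => ∀ i, y i = true → x i = z i

/-- `χ^S` is correlation-immune of order `k`: all faces obtained by fixing `k`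
coordinates (i.e. faces `E^n_y(z)` with `wt y = k`) intersect `S` in the same
cardinality. -/
def CorrImmune {n : ℕ} (S : Finset (Fin n → Bool)) (k : ℕ) : Prop :=
  ∀ y₁ z₁ y₂ z₂ : Fin n → Bool, wt y₁ = k → wt y₂ = k →
    (face y₁ z₁ ∩ S).card = (face y₂ z₂ ∩ S).card

/-- `cor S` : the maximum order of correlation immunity of `χ^S`. -/
noncomputable def cor {n : ℕ} (S : Finset (Fin n → Bool)) : ℕ :=
  sSup {k | k ≤ n ∧ CorrImmune S k}

/-- Density `ρ(S) = |S| / 2^n`. -/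
def rho {n : ℕ} (S : Finset (Fin n → Bool)) : ℚ := (S.card : ℚ) / 2 ^ n

/-- `nei S`: the average number of neighbors in `S` of vertices of `S`,
`(1/|S|) ∑_{x∈S} |B(x) ∩ S| - 1`, where `B x` is the Hamming ball of radius 1. -/
def nei {n : ℕ} (S : Finset (Fin n → Bool)) : ℚ :=
  (∑ x ∈ S, ((S.filter fun y => hammingDist x y ≤ 1).card : ℚ)) / (S.card : ℚ) - 1

/-- Characteristic function of `S`, as a rational-valued function. -/
def chi {n : ℕ} (S : Finset (Fin n → Bool)) (x : Fin n → Bool) : ℚ := if x ∈ S then 1 else 0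

/-- Characteristic function of `S` as a 2-coloring (color 1 = membership in `S`). -/
def chiCol {n : ℕ} (S : Finset (Fin n → Bool)) (x : Fin n → Bool) : Fin 2 :=
  if x ∈ S then 1 else 0

/-- `Col` is a perfect coloring with parameter matrix `A`: every vertex of color `i`
has exactly `A i j` neighbors (at Hamming distance 1) of color `j`. -/
def IsPerfectColoring {n : ℕ} (Col : (Fin n → Bool) → Fin 2) (A : Fin 2 → Fin 2 → ℕ) : Prop :=
  ∀ x : Fin n → Bool, ∀ j : Fin 2,
    (Finset.univ.filter fun y => hammingDist x y = 1 ∧ Col y = j).card = A (Col x) j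

/-- Fourier transform `â(v) = ∑_u a(u) (-1)^{⟨u,v⟩}`. -/
def fourierT {n : ℕ} (a : (Fin n → Bool) → ℚ) (v : Fin n → Bool) : ℚ :=
  ∑ u : Fin n → Bool, a u * (-1) ^ ((Finset.univ.filter fun i => u i = true ∧ v i = true).card)

/-- Coordinatewise XOR. -/
def xorv {n : ℕ} (u v : Fin n → Bool) : Fin n → Bool := fun i => xor (u i) (v i)

/-- Weight distribution `B_i(a) = (1/|S|) |{(u,v) ∈ S×S : wt(u⊕v) = i}|`. -/
def Bdist {n : ℕ} (S : Finset (Fin n → Bool)) (i : ℕ) : ℚ :=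
  (((S ×ˢ S).filter fun p => wt (xorv p.1 p.2) = i).card : ℚ) / (S.card : ℚ)

/-- Kravchuk polynomial `P_k(i) = ∑_{j=0}^k (-1)^j C(i,j) C(n-i,k-j)`. -/
def krav (n k i : ℕ) : ℚ :=
  ∑ j ∈ Finset.range (k + 1),
    (-1 : ℚ) ^ j * (Nat.choose i j : ℚ) * (Nat.choose (n - i) (k - j) : ℚ)

/-- MacWilliams transform `B'_k(a) = (1/|S|) ∑_{i=0}^n B_i(a) P_k(i)`. -/
def Bmw {n : ℕ} (S : Finset (Fin n → Bool)) (k : ℕ) : ℚ :=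
  (∑ i ∈ Finset.range (n + 1), Bdist S i * krav n k i) / (S.card : ℚ)

/-!
The Kravchuk polynomial is a character sum: comparing coefficients of
`∏ᵢ (1 ± X) = (1 - X) ^ wt x * (1 + X) ^ (n - wt x)` gives
`P_k(wt x) = ∑_{wt w = k} (-1) ^ ⟨x, w⟩`. As characters are multiplicative,
`|S|² B'_k = ∑_{wt w = k} â(w)²`. If `S` is correlation-immune of order `m ≥ wt w > 0`, pick
`y ⊇ supp w` of weight `m`: the faces `E_y(v)` cut `S` into pieces of equal size and the character
of `w` is constant on each of them, so `â(w)` is a multiple of the sum of a nontrivial character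
over the subcube `{v ≤ y}`, which is zero.
-/

open Polynomial

theorem coeff_one_sub_X_pow {R : Type*} [CommRing R] (i j : ℕ) :
    ((1 - X : R[X]) ^ i).coeff j = (-1) ^ j * i.choose j := by
  rw [sub_eq_add_neg, add_comm, add_pow, finsetSum_coeff]
  simp only [neg_pow (X : R[X]), one_pow, mul_one, ← C_eq_natCast, ← C_1, ← C_neg, ← C_pow,
    mul_right_comm _ (X ^ _), ← C_mul, coeff_C_mul_X_pow, sum_ite_eq, mem_range]
  split_ifs with hj
  · rfl
  · rw [Nat.choose_eq_zero_of_lt (by omega), Nat.cast_zero, mul_zero]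

theorem krav_eq_coeff (n k i : ℕ) :
    krav n k i = ((1 - X : ℚ[X]) ^ i * (1 + X) ^ (n - i)).coeff k := by
  rw [coeff_mul, Nat.sum_antidiagonal_eq_sum_range_succ
    (fun j l => ((1 - X : ℚ[X]) ^ i).coeff j * ((1 + X) ^ (n - i)).coeff l)]
  simp only [coeff_one_sub_X_pow, coeff_one_add_X_pow, krav]

def walsh {n : ℕ} (v u : Fin n → Bool) : ℚ :=
  (-1) ^ (univ.filter fun i => u i = true ∧ v i = true).card

theorem walsh_eq_prod {n : ℕ} (v u : Fin n → Bool) :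
    walsh v u = ∏ i, if u i = true ∧ v i = true then -1 else 1 := by
  rw [prod_ite, prod_const, prod_const, one_pow, mul_one, walsh]

theorem walsh_xorv {n : ℕ} (v u u' : Fin n → Bool) :
    walsh v (xorv u u') = walsh v u * walsh v u' := by
  simp only [walsh_eq_prod, ← prod_mul_distrib]
  refine prod_congr rfl fun i _ => ?_
  cases hu : u i <;> cases hu' : u' i <;> cases v i <;> simp [xorv, hu, hu']

theorem fourierT_chi {n : ℕ} (S : Finset (Fin n → Bool)) (v : Fin n → Bool) :
    fourierT (chi S) v = ∑ u ∈ S, walsh v u := by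
  simp [fourierT, chi, walsh]

theorem prod_ite_one_sub_X_one_add_X {n : ℕ} (x : Fin n → Bool) :
    ∏ i, (if x i = true then 1 - X else 1 + X : ℚ[X]) = (1 - X) ^ wt x * (1 + X) ^ (n - wt x) := by
  rw [prod_ite, prod_const, prod_const, filter_not, card_sdiff_of_subset (subset_univ _),
    card_univ, Fintype.card_fin]
  rfl

theorem prod_ite_one_sub_X_one_add_X_eq_sum_walsh {n : ℕ} (x : Fin n → Bool) :
    ∏ i, (if x i = true then 1 - X else 1 + X : ℚ[X]) = ∑ w, C (walsh w x) * X ^ wt w := by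
  have factor : ∀ i, (if x i = true then 1 - X else 1 + X : ℚ[X]) =
      ∑ b : Bool,
        C (if x i = true ∧ b = true then -1 else 1) * X ^ (if b = true then 1 else 0) := by
    intro i
    cases x i <;> simp [sub_eq_add_neg, add_comm]
  simp only [factor, Fintype.prod_sum, prod_mul_distrib, ← map_prod, prod_pow_eq_pow_sum,
    walsh_eq_prod, sum_boole, Nat.cast_id]
  rfl

theorem krav_wt_eq_sum_walsh {n : ℕ} (k : ℕ) (x : Fin n → Bool) :
    krav n k (wt x) = ∑ w with wt w = k, walsh w x := by
  rw [krav_eq_coeff, ← prod_ite_one_sub_X_one_add_X, prod_ite_one_sub_X_one_add_X_eq_sum_walsh,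
    finsetSum_coeff, sum_filter]
  simp only [coeff_C_mul_X_pow, eq_comm]

theorem wt_le {n : ℕ} (y : Fin n → Bool) : wt y ≤ n :=
  (card_filter_le _ _).trans_eq (card_fin n)

theorem sum_range_card_filter_mul {α R : Type*} [NonAssocSemiring R] (s : Finset α) (f : α → ℕ)
    (g : ℕ → R) {N : ℕ} (hf : ∀ a ∈ s, f a ≤ N) :
    ∑ i ∈ range (N + 1), (#{a ∈ s | f a = i} : R) * g i = ∑ a ∈ s, g (f a) := by
  rw [← sum_fiberwise_of_maps_to (g := f) (t := range (N + 1))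
    fun a ha => mem_range_succ_iff.mpr (hf a ha)]
  refine sum_congr rfl fun i _ => ?_
  rw [sum_congr rfl fun a ha => by rw [(mem_filter.mp ha).2], sum_const, nsmul_eq_mul]

theorem sum_krav_wt_xorv {n : ℕ} (S : Finset (Fin n → Bool)) (k : ℕ) :
    ∑ p ∈ S ×ˢ S, krav n k (wt (xorv p.1 p.2)) = ∑ w with wt w = k, fourierT (chi S) w ^ 2 := by
  simp only [krav_wt_eq_sum_walsh, walsh_xorv, fourierT_chi, sq, sum_mul_sum]
  rw [sum_comm]
  simp only [sum_product]

theorem Bmw_eq_sum_sq_fourierT {n : ℕ} (S : Finset (Fin n → Bool)) (k : ℕ) :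
    Bmw S k = (∑ w with wt w = k, fourierT (chi S) w ^ 2) / (S.card : ℚ) ^ 2 := by
  simp only [Bmw, Bdist, div_mul_eq_mul_div, ← sum_div]
  rw [sum_range_card_filter_mul _ _ _ fun p _ => wt_le (xorv p.1 p.2), sum_krav_wt_xorv,
    div_div, sq]

/-- `andv u y` is the paper's `[u,y]`. -/
def andv {n : ℕ} (u y : Fin n → Bool) : Fin n → Bool := fun i => u i && y i

theorem mem_face_iff {n : ℕ} {y z x : Fin n → Bool} : x ∈ face y z ↔ andv x y = andv z y := by
  simp only [face, andv, mem_filter, mem_univ, true_and, funext_iff]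
  refine forall_congr' fun i => ?_
  cases y i <;> simp

theorem walsh_andv {n : ℕ} {w y : Fin n → Bool} (hwy : ∀ i, w i = true → y i = true)
    (u : Fin n → Bool) : walsh w (andv u y) = walsh w u := by
  simp only [walsh_eq_prod, andv]
  refine prod_congr rfl fun i _ => ?_
  cases hw : w i
  · simp
  · simp [hwy i hw]

theorem sum_walsh_piFinset_eq_zero {n : ℕ} (t : Fin n → Finset Bool) {w : Fin n → Bool}
    {i : Fin n} (hw : w i = true) (ht : t i = univ) : ∑ v ∈ Fintype.piFinset t, walsh w v = 0 := by
  simp only [walsh_eq_prod]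
  rw [← prod_univ_sum t fun i b => if b = true ∧ w i = true then (-1 : ℚ) else 1]
  exact prod_eq_zero (mem_univ i) (by simp [ht, hw])

theorem fourierT_chi_eq_zero_of_corrImmune {n m : ℕ} {S : Finset (Fin n → Bool)}
    (hS : CorrImmune S m) (hm : m ≤ n) {w : Fin n → Bool} (hw0 : 0 < wt w) (hwm : wt w ≤ m) :
    fourierT (chi S) w = 0 := by
  obtain ⟨Y, hwY, hYm⟩ := exists_superset_card_eq hwm (by simpa using hm)
  set y : Fin n → Bool := fun i => decide (i ∈ Y)
  have hy : wt y = m := by simp [wt, y, hYm]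
  have hwy : ∀ i, w i = true → y i = true := fun i hi => by simpa [y] using hwY (by simpa using hi)
  obtain ⟨i, hi⟩ : ∃ i, w i = true := by simpa [wt, filter_nonempty_iff] using hw0
  set T := Fintype.piFinset fun i => if y i = true then univ else {false}
  have mem_T : ∀ v, v ∈ T ↔ andv v y = v := by
    intro v
    simp only [T, Fintype.mem_piFinset, andv, funext_iff]
    refine forall_congr' fun j => ?_
    cases y j <;> cases v j <;> simp
  have fiber : ∀ v ∈ T, ∑ u ∈ S with andv u y = v, walsh w u = #(face y v ∩ S) * walsh w v := by
    intro v hv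
    have hfiber : {u ∈ S | andv u y = v} = face y v ∩ S := by
      ext u
      rw [mem_filter, mem_inter, mem_face_iff, (mem_T v).mp hv, and_comm]
    rw [← hfiber, ← nsmul_eq_mul, ← sum_const]
    refine sum_congr rfl fun u hu => ?_
    rw [← walsh_andv hwy u, (mem_filter.mp hu).2]
  calc fourierT (chi S) w = ∑ u ∈ S, walsh w u := fourierT_chi S w
    _ = ∑ v ∈ T, ∑ u ∈ S with andv u y = v, walsh w u :=
      (sum_fiberwise_of_maps_to (g := (andv · y))
        (fun u _ => (mem_T _).mpr (funext fun j => by simp [andv])) _).symm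
    _ = ∑ v ∈ T, #(face y y ∩ S) * walsh w v :=
      sum_congr rfl fun v hv => by rw [fiber v hv, hS y v y y hy hy]
    _ = 0 := by rw [← mul_sum, sum_walsh_piFinset_eq_zero _ hi (by simp [hwy i hi]), mul_zero]

theorem corrImmune_zero {n : ℕ} (S : Finset (Fin n → Bool)) : CorrImmune S 0 := by
  have face_univ : ∀ y z : Fin n → Bool, wt y = 0 → face y z = univ := by
    intro y z hy
    simp_all [wt, face, filter_eq_empty_iff]
  intro y₁ z₁ y₂ z₂ h₁ h₂
  rw [face_univ y₁ z₁ h₁, face_univ y₂ z₂ h₂]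

theorem corrImmune_cor {n : ℕ} (S : Finset (Fin n → Bool)) : cor S ≤ n ∧ CorrImmune S (cor S) :=
  Nat.sSup_mem (s := {k | k ≤ n ∧ CorrImmune S k}) ⟨0, n.zero_le, corrImmune_zero S⟩
    ⟨n, fun _ hk => hk.1⟩

theorem stmt14_general {n : ℕ} (S : Finset (Fin n → Bool)) :
    ∀ k : ℕ, 0 < k → k ≤ cor S → Bmw S k = 0 := by
  intro k hk hkS
  obtain ⟨hcor_le, hcor⟩ := corrImmune_cor S
  rw [Bmw_eq_sum_sq_fourierT, sum_eq_zero, zero_div]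
  intro w hw
  have hwk : wt w = k := (mem_filter.mp hw).2
  rw [fourierT_chi_eq_zero_of_corrImmune hcor hcor_le (hwk ▸ hk) (hwk ▸ hkS), sq, zero_mul]

/-- If `0̄ ∈ S` then `B'_k(a) = 0` for every `k` with `0 < k ≤ cor S`. -/
theorem stmt14 {n : ℕ} (S : Finset (Fin n → Bool)) (h0 : (fun _ => false) ∈ S) :
    ∀ k : ℕ, 0 < k → k ≤ cor S → Bmw S k = 0 :=
  stmt14_general S
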